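/- Let Q be a finite-dimensional real vector space, P = Q × Q × Q*, and consider the linear maps φ₁ : P → Q × Q*, φ₁(a,b,c) = (a,c), and φ₂ : P → (Q × Q) × (Q × Q)*, φ₂(a,b,c) = ((a,b), ι(c)), where ι : Q* → (Q × Q)* is given by ι(c)(x,y) = c(x). Let D₁ ⊆ (Q × Q*) × (Q × Q*)* be the graph Dirac structure of the canonical symplectic form ω on Q × Q*, and let D₂ ⊆ ((Q×Q) × (Q×Q)*) × ((Q×Q) × (Q×Q)*)* be the graph Dirac structure of the canonical symplectic form on (Q×Q) × (Q×Q)*. Then the two backward images coincide: B_{φ₁}(D₁) = B_{φ₂}(D₂). -/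

import Mathlib

/-!
The backward image of the graph of a 2-form `ω` under `φ` is the graph of the pullback
`φ^*ω`. So it suffices that the canonical forms pull back to the same form on `P`, and
both pullbacks are `((a,b,c),(a',b',c')) ↦ c(a') − c'(a)`.
-/

/-- The canonical symplectic form `ω((x₁,α₁),(x₂,α₂)) = α₁(x₂) − α₂(x₁)` on `X ⊕ X*`. -/
noncomputable def canonicalSymplecticForm (X : Type*) [AddCommGroup X] [Module ℝ X] :
    LinearMap.BilinForm ℝ (X × Module.Dual ℝ X) :=
  LinearMap.mk₂ ℝ (fun x y => x.2 y.1 - y.2 x.1)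
    (by intro m₁ m₂ n; simp; ring)
    (by intro c m n; simp; ring)
    (by intro m n₁ n₂; simp; ring)
    (by intro c m n; simp; ring)

/-- The graph Dirac structure `{(w, ω_X(w,·)) | w ∈ X ⊕ X*}` of the canonical
symplectic form on `X ⊕ X*`. -/
noncomputable def canonicalGraphDirac (X : Type*) [AddCommGroup X] [Module ℝ X] :
    Submodule ℝ ((X × Module.Dual ℝ X) × Module.Dual ℝ (X × Module.Dual ℝ X)) :=
  LinearMap.range (LinearMap.prod LinearMap.id (canonicalSymplecticForm X))

/-- The backward image `B_φ(D_V) = {(u, β ∘ φ) | u ∈ U, β ∈ V*, (φ(u), β) ∈ D_V}`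
of a subspace `D_V ⊆ V ⊕ V*` under a linear map `φ : U → V`. -/
noncomputable def backwardImage {U V : Type*} [AddCommGroup U] [Module ℝ U]
    [AddCommGroup V] [Module ℝ V] (φ : U →ₗ[ℝ] V)
    (D : Submodule ℝ (V × Module.Dual ℝ V)) : Submodule ℝ (U × Module.Dual ℝ U) where
  carrier := {p | ∃ β : Module.Dual ℝ V, p.2 = β.comp φ ∧ (φ p.1, β) ∈ D}
  add_mem' := by
    rintro ⟨u₁, α₁⟩ ⟨u₂, α₂⟩ ⟨β₁, h₁, hD₁⟩ ⟨β₂, h₂, hD₂⟩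
    exact ⟨β₁ + β₂, by simp at h₁ h₂; simp [h₁, h₂, LinearMap.add_comp],
      by simpa using D.add_mem hD₁ hD₂⟩
  zero_mem' := ⟨0, by simp, by simp only [Prod.fst_zero, map_zero]; exact D.zero_mem⟩
  smul_mem' := by
    rintro c ⟨u, α⟩ ⟨β, h, hD⟩
    exact ⟨c • β, by simp at h; simp [h, LinearMap.smul_comp],
      by simpa using D.smul_mem c hD⟩

section BackwardImage

variable {U V : Type*} [AddCommGroup U] [Module ℝ U] [AddCommGroup V] [Module ℝ V]

lemma mem_canonicalGraphDirac (v : V × Module.Dual ℝ V)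
    (β : Module.Dual ℝ (V × Module.Dual ℝ V)) :
    (v, β) ∈ canonicalGraphDirac V ↔ β = canonicalSymplecticForm V v := by
  constructor
  · rintro ⟨w, hw⟩
    obtain ⟨rfl, rfl⟩ := Prod.mk.inj hw
    rfl
  · rintro rfl
    exact ⟨v, rfl⟩

lemma mem_backwardImage_canonicalGraphDirac (φ : U →ₗ[ℝ] V × Module.Dual ℝ V)
    (p : U × Module.Dual ℝ U) :
    p ∈ backwardImage φ (canonicalGraphDirac V) ↔
      p.2 = (canonicalSymplecticForm V).compl₁₂ φ φ p.1 := by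
  change (∃ β, p.2 = β.comp φ ∧ (φ p.1, β) ∈ canonicalGraphDirac V) ↔ _
  simp_rw [mem_canonicalGraphDirac, exists_eq_right]
  rfl

end BackwardImage

lemma compl₁₂_canonicalSymplecticForm_pontryagin
    (Q : Type*) [AddCommGroup Q] [Module ℝ Q] :
    (canonicalSymplecticForm Q).compl₁₂
        (LinearMap.prod (LinearMap.fst ℝ Q (Q × Module.Dual ℝ Q))
          ((LinearMap.snd ℝ Q (Module.Dual ℝ Q)).comp
            (LinearMap.snd ℝ Q (Q × Module.Dual ℝ Q))))
        (LinearMap.prod (LinearMap.fst ℝ Q (Q × Module.Dual ℝ Q))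
          ((LinearMap.snd ℝ Q (Module.Dual ℝ Q)).comp
            (LinearMap.snd ℝ Q (Q × Module.Dual ℝ Q)))) =
    (canonicalSymplecticForm (Q × Q)).compl₁₂
        (LinearMap.prod
          (LinearMap.prod (LinearMap.fst ℝ Q (Q × Module.Dual ℝ Q))
            ((LinearMap.fst ℝ Q (Module.Dual ℝ Q)).comp
              (LinearMap.snd ℝ Q (Q × Module.Dual ℝ Q))))
          ((LinearMap.fst ℝ Q Q).dualMap.comp
            ((LinearMap.snd ℝ Q (Module.Dual ℝ Q)).comp
              (LinearMap.snd ℝ Q (Q × Module.Dual ℝ Q)))))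
        (LinearMap.prod
          (LinearMap.prod (LinearMap.fst ℝ Q (Q × Module.Dual ℝ Q))
            ((LinearMap.fst ℝ Q (Module.Dual ℝ Q)).comp
              (LinearMap.snd ℝ Q (Q × Module.Dual ℝ Q))))
          ((LinearMap.fst ℝ Q Q).dualMap.comp
            ((LinearMap.snd ℝ Q (Module.Dual ℝ Q)).comp
              (LinearMap.snd ℝ Q (Q × Module.Dual ℝ Q))))) := by
  refine LinearMap.ext₂ fun p q => ?_
  simp [canonicalSymplecticForm]

theorem pontryagin_backward_images_coincide_general
    (Q : Type*) [AddCommGroup Q] [Module ℝ Q] :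
    backwardImage
      (LinearMap.prod (LinearMap.fst ℝ Q (Q × Module.Dual ℝ Q))
        ((LinearMap.snd ℝ Q (Module.Dual ℝ Q)).comp
          (LinearMap.snd ℝ Q (Q × Module.Dual ℝ Q))))
      (canonicalGraphDirac Q) =
    backwardImage
      (LinearMap.prod
        (LinearMap.prod (LinearMap.fst ℝ Q (Q × Module.Dual ℝ Q))
          ((LinearMap.fst ℝ Q (Module.Dual ℝ Q)).comp
            (LinearMap.snd ℝ Q (Q × Module.Dual ℝ Q))))
        ((LinearMap.fst ℝ Q Q).dualMap.comp
          ((LinearMap.snd ℝ Q (Module.Dual ℝ Q)).comp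
            (LinearMap.snd ℝ Q (Q × Module.Dual ℝ Q)))))
      (canonicalGraphDirac (Q × Q)) := by
  ext p
  rw [mem_backwardImage_canonicalGraphDirac, mem_backwardImage_canonicalGraphDirac,
    compl₁₂_canonicalSymplecticForm_pontryagin]

/-- (Fiberwise linear content of `D_M = B_{pr_{T*Q}}(D_{ω_Q}) =
B_{i_M}(D_{ω_{TQ}})` on the Pontryagin bundle `M = TQ ⊕ T*Q`.)  Let `Q` be a
finite-dimensional real vector space, `P = Q × Q × Q*`, `φ₁ : P → Q × Q*`,
`φ₁(a,b,c) = (a,c)`, and `φ₂ : P → (Q × Q) × (Q × Q)*`, `φ₂(a,b,c) = ((a,b), ι c)`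
with `ι(c)(x,y) = c(x)`.  Then the backward images of the graph Dirac structures of the
canonical symplectic forms on `Q × Q*` and on `(Q × Q) × (Q × Q)*` coincide:
`B_{φ₁}(D₁) = B_{φ₂}(D₂)`. -/
theorem pontryagin_backward_images_coincide
    (Q : Type*) [AddCommGroup Q] [Module ℝ Q] [FiniteDimensional ℝ Q] :
    backwardImage
      (LinearMap.prod (LinearMap.fst ℝ Q (Q × Module.Dual ℝ Q))
        ((LinearMap.snd ℝ Q (Module.Dual ℝ Q)).comp
          (LinearMap.snd ℝ Q (Q × Module.Dual ℝ Q))))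
      (canonicalGraphDirac Q) =
    backwardImage
      (LinearMap.prod
        (LinearMap.prod (LinearMap.fst ℝ Q (Q × Module.Dual ℝ Q))
          ((LinearMap.fst ℝ Q (Module.Dual ℝ Q)).comp
            (LinearMap.snd ℝ Q (Q × Module.Dual ℝ Q))))
        ((LinearMap.fst ℝ Q Q).dualMap.comp
          ((LinearMap.snd ℝ Q (Module.Dual ℝ Q)).comp
            (LinearMap.snd ℝ Q (Q × Module.Dual ℝ Q)))))
      (canonicalGraphDirac (Q × Q)) :=
  pontryagin_backward_images_coincide_general Q
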